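/- arXiv:1711.06739 — 5 statements merged into one kernel-verified Lean document; each statement's English description precedes it below -/
import Mathlib

section
/- The Birget–Rhodes expansion of a group G is an inverse semigroup: every element (R,g) has a unique generalized inverse, given by (g⁻¹R, g⁻¹). -/
/-- The Birget–Rhodes expansion of a group `G`: pairs `(R, g)` where `R` is a
finite subset of `G` containing `1` and `g`. -/
def BR (G : Type*) [Group G] [DecidableEq G] : Type _ :=
  {p : Finset G × G // (1 : G) ∈ p.1 ∧ p.2 ∈ p.1}

variable {G : Type*} [Group G] [DecidableEq G]

/-- Multiplication `(R,g)·(S,h) = (R ∪ gS, gh)`. -/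
instance : Mul (BR G) :=
  ⟨fun x y =>
    ⟨(x.1.1 ∪ y.1.1.image (x.1.2 * ·), x.1.2 * y.1.2),
      Finset.mem_union_left _ x.2.1,
      Finset.mem_union_right _ (Finset.mem_image_of_mem _ y.2.2)⟩⟩

/-- The candidate generalized inverse `(g⁻¹R, g⁻¹)` of `(R,g)`. -/
def BRinv (x : BR G) : BR G :=
  ⟨(x.1.1.image (x.1.2⁻¹ * ·), x.1.2⁻¹),
    by simpa using Finset.mem_image_of_mem (x.1.2⁻¹ * ·) x.2.2,
    by simpa using Finset.mem_image_of_mem (x.1.2⁻¹ * ·) x.2.1⟩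

open Pointwise

namespace BR

/- `R.image (g * ·)` is definitionally the pointwise translate `g • R`, so these hold by `rfl`. -/

lemma BRinv_val (x : BR G) : (BRinv x).1 = (x.1.2⁻¹ • x.1.1, x.1.2⁻¹) := rfl

lemma mul_mul_val (x y z : BR G) :
    (x * y * z).1 =
      (x.1.1 ∪ x.1.2 • y.1.1 ∪ (x.1.2 * y.1.2) • z.1.1, x.1.2 * y.1.2 * z.1.2) := rfl

lemma mul_BRinv_mul_self (x : BR G) : x * BRinv x * x = x :=
  Subtype.ext <| by simp [mul_mul_val, BRinv_val, smul_smul]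

lemma BRinv_mul_self_mul_BRinv (x : BR G) : BRinv x * x * BRinv x = BRinv x :=
  Subtype.ext <| by simp [mul_mul_val, BRinv_val, smul_smul]

lemma eq_BRinv_of_mul_mul (x y : BR G) (hx : x * y * x = x) (hy : y * x * y = y) :
    y = BRinv x := by
  obtain ⟨⟨R, g⟩, _, _⟩ := x
  obtain ⟨⟨S, h⟩, _, _⟩ := y
  have hR : R ∪ g • S ∪ (g * h) • R = R := congrArg (·.1.1) hx
  have hS : S ∪ h • R ∪ (h * g) • S = S := congrArg (·.1.1) hy
  have hh : h = g⁻¹ :=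
    eq_inv_of_mul_eq_one_right <| mul_eq_right.mp (congrArg (·.1.2) hx : g * h * g = g)
  subst hh
  have hSR : g • S ⊆ R := hR ▸ Finset.subset_union_right.trans Finset.subset_union_left
  have hRS : g⁻¹ • R ⊆ S := hS ▸ Finset.subset_union_right.trans Finset.subset_union_left
  exact Subtype.ext <| Prod.ext
    (Finset.Subset.antisymm (Finset.smul_finset_subset_iff.mp hSR) hRS) rfl

end BR

/-- The Birget–Rhodes expansion is an inverse semigroup: every element `(R,g)`
has a unique generalized inverse, given by `(g⁻¹R, g⁻¹)`. -/
theorem BR_inverseSemigroup (x : BR G) :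
    (x * BRinv x * x = x ∧ BRinv x * x * BRinv x = BRinv x) ∧
      ∀ y : BR G, x * y * x = x → y * x * y = y → y = BRinv x :=
  ⟨⟨BR.mul_BRinv_mul_self x, BR.BRinv_mul_self_mul_BRinv x⟩,
    BR.eq_BRinv_of_mul_mul x⟩
end

section
/- The map Π : G → Γ(G) given by Π(g) = ({1,g}, g) is an injective partial homomorphism, i.e., it satisfies Π(1)Π(g) = Π(g) = Π(g)Π(1), Π(g⁻¹)Π(g)Π(h) = Π(g⁻¹)Π(gh), and Π(g)Π(h)Π(h⁻¹) = Π(gh)Π(h⁻¹) for all g,h ∈ G. -/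
variable {G : Type*} [Group G] [DecidableEq G]

/-- The universal map `Π(g) = ({1,g}, g)`. -/
def BRpi (g : G) : BR G :=
  ⟨({1, g}, g), Finset.mem_insert_self _ _,
    Finset.mem_insert_of_mem (Finset.mem_singleton_self _)⟩


theorem BRpi_fst (g : G) : (BRpi g).1.1 = {1, g} := rfl

theorem BRpi_snd (g : G) : (BRpi g).1.2 = g := rfl

namespace BR

theorem ext {x y : BR G} (hset : x.1.1 = y.1.1) (hel : x.1.2 = y.1.2) : x = y :=
  Subtype.ext (Prod.ext hset hel)

theorem mul_fst (x y : BR G) : (x * y).1.1 = x.1.1 ∪ y.1.1.image (x.1.2 * ·) := rfl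

theorem mul_snd (x y : BR G) : (x * y).1.2 = x.1.2 * y.1.2 := rfl

theorem mul_BRpi_fst (x : BR G) (h : G) : (x * BRpi h).1.1 = insert (x.1.2 * h) x.1.1 := by
  have hx : x.1.2 * 1 ∈ x.1.1 := (mul_one x.1.2).symm ▸ x.2.2
  rw [mul_fst, BRpi_fst, Finset.image_insert, Finset.image_singleton, Finset.union_insert,
    Finset.insert_eq_of_mem (Finset.mem_union_left _ hx), Finset.union_singleton]

end BR

/-- `Π` is an injective partial homomorphism. -/
theorem BRpi_injective_partialHom :
    Function.Injective (BRpi (G := G)) ∧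
      (∀ g : G, BRpi 1 * BRpi g = BRpi g ∧ BRpi g * BRpi 1 = BRpi g) ∧
      (∀ g h : G, BRpi g⁻¹ * BRpi g * BRpi h = BRpi g⁻¹ * BRpi (g * h)) ∧
      (∀ g h : G, BRpi g * BRpi h * BRpi h⁻¹ = BRpi (g * h) * BRpi h⁻¹) := by
  refine ⟨fun g h hgh => congrArg (fun x : BR G => x.1.2) hgh,
    fun g => ⟨BR.ext ?_ ?_, BR.ext ?_ ?_⟩, fun g h => BR.ext ?_ ?_, fun g h => BR.ext ?_ ?_⟩
  all_goals simp only [BR.mul_BRpi_fst, BR.mul_snd, BRpi_fst, BRpi_snd, one_mul, mul_one,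
    inv_mul_cancel, inv_mul_cancel_left, mul_inv_cancel_right]
  all_goals ext; simp only [Finset.mem_insert, Finset.mem_singleton]; tauto
end

section
/- If Π(x)Π(y)Π(z) does not belong to an ideal I of Γ(G) containing N₃, then 1 ∈ {x, y, z, xy, yz, xyz}. -/
variable {G : Type*} [Group G] [DecidableEq G]

/-- A two-sided ideal of the Birget–Rhodes expansion. -/
def IsIdeal (I : Set (BR G)) : Prop :=
  ∀ a ∈ I, ∀ s : BR G, s * a ∈ I ∧ a * s ∈ I

/-- The ideal `N₃ = {(R,g) : |R| ≥ 4}`. -/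
def N3 (G : Type*) [Group G] [DecidableEq G] : Set (BR G) :=
  {x : BR G | 4 ≤ x.1.1.card}


/-- If `Π(x)Π(y)Π(z)` does not belong to an ideal `I ⊇ N₃`, then
`1 ∈ {x, y, z, xy, yz, xyz}`. -/
theorem one_mem_of_triple_not_mem (I : Set (BR G)) (hI : IsIdeal I)
    (hN : N3 G ⊆ I) (x y z : G) (h : BRpi x * BRpi y * BRpi z ∉ I) :
    (1 : G) ∈ ({x, y, z, x * y, y * z, x * y * z} : Set G) := by
  by_contra hc
  simp only [Set.mem_insert_iff, Set.mem_singleton_iff, not_or] at hc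
  obtain ⟨hx, hy, hz, hxy, hyz, hxyz⟩ := hc
  apply h
  apply hN
  show 4 ≤ (BRpi x * BRpi y * BRpi z).1.1.card
  have hsub : ({1, x, x * y, x * y * z} : Finset G) ⊆
      (BRpi x * BRpi y * BRpi z).1.1 := by
    intro a ha
    simp only [Finset.mem_insert, Finset.mem_singleton] at ha
    show a ∈ (({1, x} ∪ ({1, y} : Finset G).image (x * ·)) ∪
      ({1, z} : Finset G).image ((x * y) * ·))
    simp only [Finset.mem_union, Finset.mem_insert, Finset.mem_singleton,
      Finset.mem_image]
    rcases ha with rfl | rfl | rfl | rfl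
    · exact Or.inl (Or.inl (Or.inl rfl))
    · exact Or.inl (Or.inl (Or.inr rfl))
    · exact Or.inl (Or.inr ⟨y, by simp⟩)
    · exact Or.inr ⟨z, by simp [mul_assoc]⟩
  calc 4 = ({1, x, x * y, x * y * z} : Finset G).card := by
        rw [Finset.card_insert_of_notMem, Finset.card_insert_of_notMem,
          Finset.card_insert_of_notMem, Finset.card_singleton]
        · simp only [Finset.mem_singleton]
          intro hcon
          exact hz (mul_left_cancel (a := x * y) (by rw [mul_one]; exact hcon))
        · simp only [Finset.mem_insert, Finset.mem_singleton, not_or]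
          constructor
          · intro hcon; exact hy (mul_left_cancel (a := x) (by rw [mul_one]; exact hcon))
          · intro hcon
            exact hyz (mul_left_cancel (a := x) (by rw [mul_one, ← mul_assoc]; exact hcon))
        · simp only [Finset.mem_insert, Finset.mem_singleton, not_or]
          exact ⟨hx, hxy, hxyz⟩
    _ ≤ _ := Finset.card_le_card hsub
end

section
/- A function σ : G×G → A is a pre-cocycle (i.e., δ²σ(x,y,z) = 0 whenever 1 ∈ {x,y,z,xy,yz,xyz}) if and only if δ²σ(x,y,z) = 0 whenever 1 ∈ {xy, xyz}. -/
variable {G : Type*} [Group G] {A : Type*} [AddCommGroup A]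

/-- The coboundary `δ²σ(x,y,z) = σ(y,z) − σ(xy,z) + σ(x,yz) − σ(x,y)`. -/
def d2 (σ : G → G → A) (x y z : G) : A :=
  σ y z - σ (x * y) z + σ x (y * z) - σ x y

/-- A pre-cocycle: `δ²σ(x,y,z) = 0` whenever `1 ∈ {x,y,z,xy,yz,xyz}`. -/
def IsPreCocycle (σ : G → G → A) : Prop :=
  ∀ x y z : G, (1 : G) ∈ ({x, y, z, x * y, y * z, x * y * z} : Set G) →
    d2 σ x y z = 0

/-- `σ` is a pre-cocycle iff `δ²σ(x,y,z) = 0` whenever `1 ∈ {xy, xyz}`. -/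
theorem isPreCocycle_iff_weak (σ : G → G → A) :
    IsPreCocycle σ ↔
      ∀ x y z : G, (1 : G) ∈ ({x * y, x * y * z} : Set G) → d2 σ x y z = 0 := by
  constructor
  · intro h x y z hm
    apply h x y z
    simp only [Set.mem_insert_iff, Set.mem_singleton_iff] at hm ⊢
    tauto
  · intro h
    have hxy : ∀ x z : G, d2 σ x x⁻¹ z = 0 := fun x z =>
      h x x⁻¹ z (Or.inl (mul_inv_cancel x).symm)
    have hxyz : ∀ x y : G, d2 σ x y (x * y)⁻¹ = 0 := fun x y =>
      h x y (x * y)⁻¹ (Or.inr (by group; exact rfl))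
    have l1 : ∀ y : G, σ 1 y = σ 1 1 := by
      intro y
      have := hxyz 1 y
      simp only [d2, one_mul, mul_inv_cancel, sub_self, zero_add] at this
      exact (sub_eq_zero.mp this).symm
    have l2 : ∀ x : G, σ x 1 = σ 1 1 := by
      intro x
      have := hxyz x 1
      simp only [d2, mul_one, one_mul, mul_inv_cancel] at this
      have h2 : σ 1 x⁻¹ - σ x 1 = 0 := by
        linear_combination (norm := abel) this
      rw [← l1 x⁻¹]
      exact (sub_eq_zero.mp h2).symm
    intro x y z hm
    simp only [Set.mem_insert_iff, Set.mem_singleton_iff] at hm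
    rcases hm with hx | hy | hz | hxy1 | hyz1 | hxyz1
    · -- x = 1
      rw [← hx]
      simp only [d2, one_mul, l1, sub_self, zero_add]
    · rw [← hy]
      simp only [d2, mul_one, one_mul, l1, l2]
      abel
    · rw [← hz]
      simp only [d2, mul_one, l2]
      abel
    · exact h x y z (Or.inl hxy1)
    · -- y * z = 1, so z = y⁻¹
      have hz : z = y⁻¹ := (mul_eq_one_iff_inv_eq.mp hyz1.symm).symm
      subst hz
      have hA := hxyz x y
      have hB := hxyz (x * y) y⁻¹
      have hC := hxy y x⁻¹
      simp only [d2, mul_inv_rev, mul_inv_cancel, inv_mul_cancel, mul_inv_cancel_right,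
        inv_mul_cancel_right, mul_inv_cancel_left, inv_mul_cancel_left, one_mul, mul_one]
        at hA hB hC ⊢
      rw [l2 x, ← l1 x⁻¹]
      linear_combination (norm := abel) hA + hB - hC
    · exact h x y z (Or.inr hxyz1)
end

section
/- A function σ : G×G → A is a pre-cocycle if and only if for all g,h ∈ G it satisfies: (a) σ(h, h⁻¹g⁻¹) = σ(g,h) + σ(gh, h⁻¹g⁻¹) − σ(g,g⁻¹), and (b) σ(h⁻¹, g⁻¹) = −σ(h, h⁻¹g⁻¹) + σ(h, h⁻¹) + σ(1,1). -/
variable {G : Type*} [Group G] {A : Type*} [AddCommGroup A]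

/-- `σ` is a pre-cocycle iff it satisfies the identities (a) and (b). -/
theorem isPreCocycle_iff_identities (σ : G → G → A) :
    IsPreCocycle σ ↔
      (∀ g h : G,
        σ h (h⁻¹ * g⁻¹) = σ g h + σ (g * h) (h⁻¹ * g⁻¹) - σ g g⁻¹) ∧
      (∀ g h : G,
        σ h⁻¹ g⁻¹ = -σ h (h⁻¹ * g⁻¹) + σ h h⁻¹ + σ 1 1) := by
  constructor
  · intro H
    have hconst : ∀ z : G, σ 1 z = σ 1 1 := by
      intro z
      have h := H 1 1 z (by simp)
      simp only [d2, one_mul] at h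
      have h2 : σ 1 z - σ 1 1 = 0 := by rw [← h]; abel
      exact sub_eq_zero.mp h2
    constructor
    · intro g h
      have hd := H g h (h⁻¹ * g⁻¹) (by simp [Set.mem_insert_iff, mul_assoc])
      simp only [d2, mul_inv_cancel_left] at hd
      have h2 : σ h (h⁻¹ * g⁻¹) - (σ g h + σ (g * h) (h⁻¹ * g⁻¹) - σ g g⁻¹) = 0 := by
        rw [← hd]; abel
      exact sub_eq_zero.mp h2
    · intro g h
      have hd := H h h⁻¹ g⁻¹ (by simp)
      simp only [d2, mul_inv_cancel] at hd
      rw [hconst] at hd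
      have h2 : σ h⁻¹ g⁻¹ - (-σ h (h⁻¹ * g⁻¹) + σ h h⁻¹ + σ 1 1) = 0 := by
        rw [← hd]; abel
      exact sub_eq_zero.mp h2
  · rintro ⟨ha, hb⟩
    have hconst : ∀ z : G, σ 1 z = σ 1 1 := by
      intro z
      have h := ha 1 z
      simp only [one_mul, mul_one, inv_one] at h
      have h0 : σ z z⁻¹ - (σ 1 z + σ z z⁻¹ - σ 1 1) = 0 := sub_eq_zero.mpr h
      have h2 : σ 1 z - σ 1 1 = 0 := by rw [← neg_eq_zero, ← h0]; abel
      exact sub_eq_zero.mp h2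
    have hconst' : ∀ x : G, σ x 1 = σ 1 1 := by
      intro x
      have h := ha x 1
      simp only [inv_one, one_mul, mul_one] at h
      -- h : σ 1 x⁻¹ = σ x 1 + σ x x⁻¹ - σ x x⁻¹
      rw [hconst x⁻¹] at h
      have h0 : σ 1 1 - (σ x 1 + σ x x⁻¹ - σ x x⁻¹) = 0 := sub_eq_zero.mpr h
      have h2 : σ x 1 - σ 1 1 = 0 := by rw [← neg_eq_zero, ← h0]; abel
      exact sub_eq_zero.mp h2
    intro x y z hmem
    simp only [Set.mem_insert_iff, Set.mem_singleton_iff] at hmem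
    rcases hmem with hx | hy | hz | hxy | hyz | hxyz
    · subst x
      simp only [d2, one_mul]
      rw [hconst (y * z), hconst y]; abel
    · subst y
      simp only [d2, one_mul, mul_one]
      rw [hconst z, hconst' x]; abel
    · subst z
      simp only [d2, mul_one]
      rw [hconst' y, hconst' (x * y)]; abel
    · have hy : y = x⁻¹ := eq_inv_of_mul_eq_one_right hxy.symm
      subst hy
      simp only [d2, mul_inv_cancel]
      have h1 := hb z⁻¹ x
      simp only [inv_inv] at h1
      rw [h1, hconst z]; abel
    · have hz : z = y⁻¹ := eq_inv_of_mul_eq_one_right hyz.symm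
      subst hz
      simp only [d2, mul_inv_cancel]
      have h1 := ha x⁻¹ (x * y)
      simp only [inv_inv, mul_inv_rev, mul_assoc, inv_mul_cancel_left, inv_mul_cancel,
        mul_one] at h1
      -- h1 : σ (x*y) (y⁻¹ * (x⁻¹ * x)) ... hope simp normalizes
      have h2 := hb y⁻¹ x⁻¹
      simp only [inv_inv, inv_mul_cancel_left] at h2
      rw [hconst' x]
      rw [h1, h2]; abel
    · have hz : z = (x * y)⁻¹ := eq_inv_of_mul_eq_one_right hxyz.symm
      subst hz
      simp only [d2, mul_inv_rev, mul_inv_cancel_left, mul_inv_cancel]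
      have h1 := ha x y
      rw [h1]
      abel
end
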